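/- arXiv:1812.03562 — 2 statements merged into one kernel-verified Lean document; each statement's English description precedes it below -/
import Mathlib

section
/- For any ε > 0 and any half-integer k, there exists a smooth Riemannian metric g on ℝ³ with ‖g - g₀‖²_{L²} ≤ ε and a smooth embedded surface S ⊂ ℝ³ carrying an isolated umbilic point of index k. -/
open Complex MeasureTheory

noncomputable section

abbrev E3 := EuclideanSpace ℝ (Fin 3)

/-- A Riemannian metric on ℝ³, given by its (smooth, symmetric, positive
definite) matrix of components in the standard coordinates. -/
def IsRiemannianMetric (g : E3 → Matrix (Fin 3) (Fin 3) ℝ) : Prop :=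
  (∀ i j, ContDiff ℝ (⊤ : ℕ∞) (fun x => g x i j)) ∧ ∀ x, (g x).IsSymm ∧ (g x).PosDef

/-- `‖g - g₀‖²` : the squared L² distance of `g` to the flat metric `g₀`
(the identity matrix in standard coordinates), i.e.
`∫ (g_{ij}-g₀_{ij})(g_{kl}-g₀_{kl}) g₀^{ik} g₀^{jl} dV₀`. -/
def l2DistFlatSq (g : E3 → Matrix (Fin 3) (Fin 3) ℝ) : ℝ :=
  ∫ x : E3, ∑ i : Fin 3, ∑ j : Fin 3, (g x i j - if i = j then 1 else 0) ^ 2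

/-- Coordinate partial derivative on ℝ³. -/
def pd3 (i : Fin 3) (f : E3 → ℝ) (x : E3) : ℝ :=
  fderiv ℝ f x (EuclideanSpace.single i 1)

/-- Christoffel symbols `Γ_{ij}^k` of a metric `g`. -/
def Christoffel3 (g : E3 → Matrix (Fin 3) (Fin 3) ℝ) (i j k : Fin 3) (x : E3) : ℝ :=
  (1/2) * ∑ p : Fin 3, (g x)⁻¹ k p *
    (pd3 i (fun y => g y j p) x + pd3 j (fun y => g y p i) x
      - pd3 p (fun y => g y i j) x)

/-- The induced metric of a parametrized surface `F : ℂ → ℝ³` on tangent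
directions `u, v ∈ ℂ ≅ ℝ²`. -/
def inducedMetric (g : E3 → Matrix (Fin 3) (Fin 3) ℝ) (F : ℂ → E3)
    (u v : ℂ) (w : ℂ) : ℝ :=
  ∑ i : Fin 3, ∑ j : Fin 3, (fderiv ℝ F w u) i * g (F w) i j * (fderiv ℝ F w v) j

/-- `F` is a smooth conformal embedded parametrization of a surface in `(ℝ³, g)`. -/
def IsConformalEmbeddedChart (g : E3 → Matrix (Fin 3) (Fin 3) ℝ) (F : ℂ → E3) : Prop :=
  ContDiff ℝ (⊤ : ℕ∞) F ∧ Function.Injective F ∧ Topology.IsEmbedding F ∧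
    (∀ w, Function.Injective (fderiv ℝ F w)) ∧
    ∃ φ : ℂ → ℝ, ∀ w, 0 < φ w ∧
      ∀ u v : ℂ, inducedMetric g F u v w = φ w * (u.re * v.re + u.im * v.im)

/-- `ν` is a unit normal field along the surface `F`. -/
def IsUnitNormalField (g : E3 → Matrix (Fin 3) (Fin 3) ℝ) (F : ℂ → E3)
    (ν : ℂ → E3) : Prop :=
  ContDiff ℝ (⊤ : ℕ∞) ν ∧ ∀ w,
    (∑ i : Fin 3, ∑ j : Fin 3, ν w i * g (F w) i j * ν w j) = 1 ∧
    ∀ u : ℂ, (∑ i : Fin 3, ∑ j : Fin 3, ν w i * g (F w) i j * (fderiv ℝ F w u) j) = 0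

/-- `j`-th component of the covariant derivative `∇_X ν` along the surface
direction `u`, where `X = dF(u)`. -/
def covDerNormal (g : E3 → Matrix (Fin 3) (Fin 3) ℝ) (F : ℂ → E3) (ν : ℂ → E3)
    (u : ℂ) (w : ℂ) (j : Fin 3) : ℝ :=
  fderiv ℝ (fun w' => ν w' j) w u +
    ∑ i : Fin 3, ∑ k : Fin 3,
      (fderiv ℝ F w u) i * Christoffel3 g i k j (F w) * ν w k

/-- Second fundamental form `Π(X,Y) = -g(∇_X ν, Y)` in the chart directions. -/
def secondFF (g : E3 → Matrix (Fin 3) (Fin 3) ℝ) (F : ℂ → E3) (ν : ℂ → E3)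
    (u v : ℂ) (w : ℂ) : ℝ :=
  -∑ j : Fin 3, ∑ l : Fin 3,
    covDerNormal g F ν u w j * g (F w) j l * (fderiv ℝ F w v) l

/-- The shear `σ = Π(e₊,e₊)` in the complex null frame of a conformal chart
(up to a positive conformal factor); it vanishes exactly at umbilic points. -/
def shear (g : E3 → Matrix (Fin 3) (Fin 3) ℝ) (F : ℂ → E3) (ν : ℂ → E3)
    (w : ℂ) : ℂ :=
  (((secondFF g F ν 1 1 w - secondFF g F ν Complex.I Complex.I w : ℝ) : ℂ)
    - Complex.I * ((2 * secondFF g F ν 1 Complex.I w : ℝ) : ℂ)) / 2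

/-- Isolated umbilic point of index `k` at `w₀`: the shear has the normal form
`σ = H (w-w₀)^a (w̄-w̄₀)^b` with `H` real and nonvanishing near `w₀`, and
`k = (b-a)/2` is the winding index of the principal foliation. -/
def HasIsolatedUmbilicOfIndex (σ : ℂ → ℂ) (w₀ : ℂ) (k : ℚ) : Prop :=
  ∃ (a b : ℕ) (H : ℂ → ℝ) (r : ℝ), 0 < r ∧
    (∀ w, ‖w - w₀‖ < r →
      σ w = ((H w : ℝ) : ℂ) * (w - w₀) ^ a * ((starRingEnd ℂ) (w - w₀)) ^ b ∧ H w ≠ 0) ∧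
    k = ((b : ℚ) - (a : ℚ)) / 2


/- ######## auxiliary constructions ######## -/

def chi (z : ℝ) : ℝ := z * Real.exp (-(z^2))
def Pfun (a b : ℕ) (w : ℂ) : ℂ := w ^ a * (starRingEnd ℂ) w ^ b
def cxy (x : E3) : ℂ := Complex.ofReal (x 0) + Complex.ofReal (x 1) * Complex.I
def Qfun (a b : ℕ) (x : E3) : ℂ :=
  Real.exp (-((a + b : ℕ) : ℝ) * ((x 0)^2 + (x 1)^2)) • Pfun a b (cxy x)
def matq (c : ℂ) : Matrix (Fin 3) (Fin 3) ℝ :=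
  !![-2*c.re, 2*c.im, 0; 2*c.im, 2*c.re, 0; 0, 0, 0]
def gmet (a b : ℕ) (δ : ℝ) (x : E3) : Matrix (Fin 3) (Fin 3) ℝ :=
  1 + (δ * chi (x 2)) • matq (Qfun a b x)

def Lmap : ℂ →L[ℝ] E3 :=
  (EuclideanSpace.equiv (Fin 3) ℝ).symm.toContinuousLinearMap.comp
    (ContinuousLinearMap.pi ![Complex.reCLM, Complex.imCLM, 0])

def nuf : ℂ → E3 := fun _ => EuclideanSpace.single 2 1

lemma Lmap_apply (w : ℂ) (i : Fin 3) :
    Lmap w i = ![w.re, w.im, 0] i := by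
  fin_cases i <;> rfl

lemma Lmap_zero : Lmap w 2 = 0 := by rw [Lmap_apply]; rfl
lemma Lmap_re : Lmap w 0 = w.re := by rw [Lmap_apply]; rfl
lemma Lmap_im : Lmap w 1 = w.im := by rw [Lmap_apply]; rfl

lemma chi_zero : chi 0 = 0 := by simp [chi]

lemma contDiff_rexp : ContDiff ℝ (⊤ : ℕ∞) Real.exp :=
  analyticOnNhd_rexp.contDiff

lemma contDiff_chi : ContDiff ℝ (⊤ : ℕ∞) chi :=
  contDiff_id.mul (contDiff_rexp.comp (contDiff_id.pow 2).neg)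

lemma hasDerivAt_chi_zero : HasDerivAt chi 1 0 := by
  have h2 : HasDerivAt (fun z : ℝ => Real.exp (-(z^2))) (Real.exp (-(0:ℝ)^2) * -(2*0)) 0 := by
    have : HasDerivAt (fun z : ℝ => -(z^2)) (-(2*(0:ℝ))) 0 := by
      simpa using ((hasDerivAt_pow 2 (0:ℝ))).fun_neg
    exact this.exp
  have := (hasDerivAt_id (0:ℝ)).fun_mul h2
  simpa [show chi = fun z => z * Real.exp (-(z^2)) from rfl] using this

lemma contDiff_cxy : ContDiff ℝ (⊤ : ℕ∞) cxy := by
  unfold cxy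
  exact (Complex.ofRealCLM.contDiff.comp (EuclideanSpace.proj (0:Fin 3)).contDiff).add
    ((Complex.ofRealCLM.contDiff.comp (EuclideanSpace.proj (1:Fin 3)).contDiff).mul contDiff_const)

lemma contDiff_Qfun (a b : ℕ) : ContDiff ℝ (⊤ : ℕ∞) (Qfun a b) := by
  unfold Qfun Pfun
  refine ContDiff.fun_smul ?_ ?_
  · refine contDiff_rexp.comp ?_
    exact (contDiff_const.mul
      (((EuclideanSpace.proj (0:Fin 3) : E3 →L[ℝ] ℝ).contDiff.pow 2).add
        ((EuclideanSpace.proj (1:Fin 3) : E3 →L[ℝ] ℝ).contDiff.pow 2)) :)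
  · exact (contDiff_cxy.pow a).mul ((Complex.conjCLE.contDiff.comp contDiff_cxy).pow b)

lemma contDiff_matq_entry (a b : ℕ) (i j : Fin 3) :
    ContDiff ℝ (⊤ : ℕ∞) (fun x => matq (Qfun a b x) i j) := by
  have hre : ContDiff ℝ (⊤ : ℕ∞) (fun x => (Qfun a b x).re) :=
    Complex.reCLM.contDiff.comp (contDiff_Qfun a b)
  have him : ContDiff ℝ (⊤ : ℕ∞) (fun x => (Qfun a b x).im) :=
    Complex.imCLM.contDiff.comp (contDiff_Qfun a b)
  fin_cases i <;> fin_cases j <;>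
    simp only [matq, Matrix.cons_val', Matrix.cons_val_zero, Matrix.cons_val_one,
      Matrix.head_cons, Matrix.empty_val', Matrix.cons_val_fin_one, Matrix.head_fin_const] <;>
    first
      | exact contDiff_const
      | exact contDiff_const.mul hre
      | exact contDiff_const.mul him

lemma gmet_entry (a b : ℕ) (δ : ℝ) (x : E3) (i j : Fin 3) :
    gmet a b δ x i j = (if i = j then 1 else 0)
      + (δ * chi (x 2)) * matq (Qfun a b x) i j := by
  simp [gmet, Matrix.add_apply, Matrix.smul_apply, smul_eq_mul, Matrix.one_apply]

lemma contDiff_gmet (a b : ℕ) (δ : ℝ) (i j : Fin 3) :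
    ContDiff ℝ (⊤ : ℕ∞) (fun x => gmet a b δ x i j) := by
  have : (fun x => gmet a b δ x i j)
      = fun x => (if i = j then (1:ℝ) else 0)
        + (δ * chi (x 2)) * matq (Qfun a b x) i j := by
    funext x; exact gmet_entry a b δ x i j
  rw [this]
  exact contDiff_const.add
    ((contDiff_const.mul (contDiff_chi.comp (EuclideanSpace.proj (2:Fin 3)).contDiff)).mul
      (contDiff_matq_entry a b i j))

lemma texp_le_one {t : ℝ} (ht : 0 ≤ t) : t * Real.exp (-(t^2)) ≤ 1 := by
  have h1 : t ≤ Real.exp (t^2) := by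
    nlinarith [Real.add_one_le_exp (t^2)]
  rw [Real.exp_neg, mul_inv_le_iff₀ (Real.exp_pos _), one_mul]
  exact h1

lemma abs_chi_le_one (z : ℝ) : |chi z| ≤ 1 := by
  have : |chi z| = |z| * Real.exp (-(|z|^2)) := by
    rw [chi, abs_mul, abs_of_pos (Real.exp_pos _), _root_.sq_abs]
  rw [this]
  exact texp_le_one (abs_nonneg z)

lemma abs_gauss_pow (c : ℕ) (s t : ℝ) (ht : 0 ≤ t) (hts : t^2 = s) :
    Real.exp (-(c:ℝ) * s) * t ^ c ≤ 1 := by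
  have : Real.exp (-(c:ℝ) * s) = (Real.exp (-(t^2)))^c := by
    rw [← Real.exp_nat_mul, ← hts]; ring_nf
  rw [this, ← mul_pow]
  refine pow_le_one₀ (by positivity) ?_
  rw [mul_comm]; exact texp_le_one ht

lemma cxy_re (x : E3) : (cxy x).re = x 0 := by simp [cxy]
lemma cxy_im (x : E3) : (cxy x).im = x 1 := by simp [cxy]

lemma abs_Qfun_le_one (a b : ℕ) (x : E3) : ‖Qfun a b x‖ ≤ 1 := by
  have habs : ‖Qfun a b x‖
      = Real.exp (-((a+b : ℕ) : ℝ) * ((x 0)^2 + (x 1)^2)) * ‖cxy x‖ ^ (a + b) := by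
    rw [Qfun, Complex.real_smul, norm_mul, Complex.norm_real, Real.norm_eq_abs,
      abs_of_pos (Real.exp_pos _), Pfun, norm_mul, norm_pow, norm_pow, Complex.norm_conj, pow_add]
  rw [habs]
  refine abs_gauss_pow (a+b) _ _ (norm_nonneg _) ?_
  rw [Complex.sq_norm, Complex.normSq_apply, cxy_re, cxy_im]; ring

lemma abs_re_Qfun (a b : ℕ) (x : E3) : |(Qfun a b x).re| ≤ 1 :=
  le_trans (Complex.abs_re_le_norm _) (abs_Qfun_le_one a b x)

lemma abs_im_Qfun (a b : ℕ) (x : E3) : |(Qfun a b x).im| ≤ 1 :=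
  le_trans (Complex.abs_im_le_norm _) (abs_Qfun_le_one a b x)

lemma isSymm_gmet (a b : ℕ) (δ : ℝ) (x : E3) : (gmet a b δ x).IsSymm := by
  rw [Matrix.IsSymm]
  ext i j
  rw [Matrix.transpose_apply, gmet_entry, gmet_entry]
  fin_cases i <;> fin_cases j <;> simp [matq]

lemma posdef_gmet (a b : ℕ) {δ : ℝ} (hδ0 : 0 ≤ δ) (hδ : δ ≤ 1/8) (x : E3) :
    (gmet a b δ x).PosDef := by
  rw [Matrix.posDef_iff_dotProduct_mulVec]
  constructor
  · rw [Matrix.IsHermitian]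
    have := isSymm_gmet a b δ x
    rw [Matrix.IsSymm] at this
    simpa [Matrix.conjTranspose, Matrix.map, star_trivial, Matrix.transpose] using this
  · intro v hv
    have hc : |δ * chi (x 2)| ≤ 1/8 := by
      rw [abs_mul, _root_.abs_of_nonneg hδ0]
      calc δ * |chi (x 2)| ≤ δ * 1 := by
            exact mul_le_mul_of_nonneg_left (abs_chi_le_one _) hδ0
        _ ≤ 1/8 := by linarith
    set c := δ * chi (x 2) with hcdef
    set r := (Qfun a b x).re with hrdef
    set s := (Qfun a b x).im with hsdef
    have hr : |r| ≤ 1 := abs_re_Qfun a b x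
    have hs : |s| ≤ 1 := abs_im_Qfun a b x
    have hcr : |c * r| ≤ 1/8 := by
      rw [abs_mul]
      calc |c| * |r| ≤ (1/8) * 1 :=
        mul_le_mul hc hr (abs_nonneg _) (by norm_num)
      _ = 1/8 := by norm_num
    have hcs : |c * s| ≤ 1/8 := by
      rw [abs_mul]
      calc |c| * |s| ≤ (1/8) * 1 :=
        mul_le_mul hc hs (abs_nonneg _) (by norm_num)
      _ = 1/8 := by norm_num
    have hvsq : 0 < (v 0)^2 + (v 1)^2 + (v 2)^2 := by
      rcases Function.ne_iff.mp hv with ⟨i, hi⟩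
      have hvi : 0 < (v i)^2 := by
        have : v i ≠ 0 := hi
        positivity
      have h3 : i = 0 ∨ i = 1 ∨ i = 2 := by omega
      rcases h3 with h | h | h <;> subst h <;>
        nlinarith [sq_nonneg (v 0), sq_nonneg (v 1), sq_nonneg (v 2)]
    have hexp : dotProduct (star v) ((gmet a b δ x).mulVec v)
        = (v 0)^2 + (v 1)^2 + (v 2)^2
          + ((c*r) * (-2*(v 0)^2 + 2*(v 1)^2) + (c*s) * (4 * (v 0) * (v 1))) := by
      simp only [star_trivial, dotProduct, Matrix.mulVec, Fin.sum_univ_three,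
        gmet_entry, matq, Matrix.cons_val', Matrix.cons_val_zero, Matrix.cons_val_one,
        Matrix.head_cons, Matrix.empty_val', Matrix.cons_val_fin_one, Matrix.head_fin_const]
      simp [Matrix.vecHead, Matrix.vecTail]
      ring
    rw [hexp]
    obtain ⟨hcr1, hcr2⟩ := abs_le.mp hcr
    obtain ⟨hcs1, hcs2⟩ := abs_le.mp hcs
    nlinarith [sq_nonneg (v 0 + v 1), sq_nonneg (v 0 - v 1), sq_nonneg (v 0), sq_nonneg (v 1), sq_nonneg (v 2)]

lemma gmet_plane (a b : ℕ) (δ : ℝ) (x : E3) (hx : x 2 = 0) :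
    gmet a b δ x = 1 := by
  rw [gmet, hx, chi_zero, mul_zero, zero_smul, add_zero]

lemma hasFDerivAt_gmet_entry (a b : ℕ) (δ : ℝ) (i j : Fin 3) (x : E3) (hx : x 2 = 0) :
    HasFDerivAt (fun y => gmet a b δ y i j)
      (matq (Qfun a b x) i j • (δ • (EuclideanSpace.proj (2 : Fin 3) : E3 →L[ℝ] ℝ))) x := by
  have hψ : HasDerivAt (fun t : ℝ => δ * chi t) (δ * 1) 0 := hasDerivAt_chi_zero.const_mul δ
  have hproj : HasFDerivAt (fun y : E3 => y 2)
      (EuclideanSpace.proj (2 : Fin 3) : E3 →L[ℝ] ℝ) x := by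
    have := (EuclideanSpace.proj (2 : Fin 3) : E3 →L[ℝ] ℝ).hasFDerivAt (x := x)
    exact this
  have hu : HasFDerivAt (fun y : E3 => δ * chi (y 2))
      ((δ * 1) • (EuclideanSpace.proj (2 : Fin 3) : E3 →L[ℝ] ℝ)) x := by
    have hψ' : HasDerivAt (fun t : ℝ => δ * chi t) (δ * 1) (x 2) := by rw [hx]; exact hψ
    exact HasDerivAt.comp_hasFDerivAt (h₂ := fun t : ℝ => δ * chi t) x hψ' hproj
  have hm : HasFDerivAt (fun y => matq (Qfun a b y) i j)
      (fderiv ℝ (fun y => matq (Qfun a b y) i j) x) x :=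
    (((contDiff_matq_entry a b i j).differentiable (by simp)) x).hasFDerivAt
  have hmul := hu.fun_mul hm
  have hfull := hmul.const_add ((1 : Matrix (Fin 3) (Fin 3) ℝ) i j)
  have heq : (fun y => gmet a b δ y i j)
      = fun y => (1 : Matrix (Fin 3) (Fin 3) ℝ) i j
          + (δ * chi (y 2)) * matq (Qfun a b y) i j := by
    funext y
    simp [gmet, Matrix.add_apply, Matrix.smul_apply, smul_eq_mul]
  rw [heq]
  refine hfull.congr_fderiv ?_
  ext y
  simp [ContinuousLinearMap.smulRight_apply, hx, chi_zero]

lemma pd3_gmet (a b : ℕ) (δ : ℝ) (i j d : Fin 3) (x : E3) (hx : x 2 = 0) :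
    pd3 d (fun y => gmet a b δ y i j) x
      = if d = 2 then δ * matq (Qfun a b x) i j else 0 := by
  rw [pd3, (hasFDerivAt_gmet_entry a b δ i j x hx).fderiv]
  simp only [ContinuousLinearMap.smul_apply, PiLp.proj_apply,
    EuclideanSpace.single_apply, smul_eq_mul]
  by_cases h : d = 2
  · subst h; simp [mul_comm]
  · have : ¬((2 : Fin 3) = d) := fun hh => h hh.symm
    simp [this, h]

lemma matq_right2 (c : ℂ) (i : Fin 3) : matq c i 2 = 0 := by
  fin_cases i <;> rfl

lemma matq_left2 (c : ℂ) (i : Fin 3) : matq c 2 i = 0 := by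
  fin_cases i <;> simp [matq, Matrix.vecHead, Matrix.vecTail]

lemma christoffel_plane (a b : ℕ) (δ : ℝ) (i j k : Fin 3) (w : ℂ) :
    Christoffel3 (gmet a b δ) i j k (Lmap w)
      = (1/2) * ((if i = 2 then δ * matq (Qfun a b (Lmap w)) j k else 0)
          + (if j = 2 then δ * matq (Qfun a b (Lmap w)) k i else 0)
          - (if k = 2 then δ * matq (Qfun a b (Lmap w)) i j else 0)) := by
  have h2 : Lmap w 2 = 0 := Lmap_zero
  have hpd : ∀ i' j' d : Fin 3, pd3 d (fun y => gmet a b δ y i' j') (Lmap w)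
      = if d = 2 then δ * matq (Qfun a b (Lmap w)) i' j' else 0 :=
    fun i' j' d => pd3_gmet a b δ i' j' d (Lmap w) h2
  rw [Christoffel3, gmet_plane a b δ _ h2, inv_one, Fin.sum_univ_three]
  simp only [hpd, Matrix.one_apply]
  fin_cases k <;> simp <;> ring

lemma fderiv_F (w : ℂ) : fderiv ℝ (⇑Lmap) w = Lmap := Lmap.fderiv

lemma covDer_eq (a b : ℕ) (δ : ℝ) (u w : ℂ) (j : Fin 3) :
    covDerNormal (gmet a b δ) (⇑Lmap) nuf u w j
      = (δ/2) * (u.re * matq (Qfun a b (Lmap w)) j 0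
          + u.im * matq (Qfun a b (Lmap w)) j 1) := by
  rw [covDerNormal]
  have hnu : (fun w' => nuf w' j) = fun _ => EuclideanSpace.single (2 : Fin 3) (1:ℝ) j := rfl
  rw [hnu, fderiv_fun_const]
  simp only [Pi.zero_apply, ContinuousLinearMap.zero_apply, fderiv_F, zero_add]
  simp only [Fin.sum_univ_three, christoffel_plane, nuf, EuclideanSpace.single_apply]
  simp only [Lmap_re, Lmap_im, Lmap_zero]
  simp [matq_right2, matq_left2]
  ring

lemma secondFF_eq (a b : ℕ) (δ : ℝ) (u v w : ℂ) :
    secondFF (gmet a b δ) (⇑Lmap) nuf u v w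
      = -(δ/2) * ((u.re * matq (Qfun a b (Lmap w)) 0 0
          + u.im * matq (Qfun a b (Lmap w)) 0 1) * v.re
          + (u.re * matq (Qfun a b (Lmap w)) 1 0
          + u.im * matq (Qfun a b (Lmap w)) 1 1) * v.im) := by
  rw [secondFF]
  have h2 : Lmap w 2 = 0 := Lmap_zero
  rw [gmet_plane a b δ _ h2]
  simp only [Fin.sum_univ_three, covDer_eq, fderiv_F, Matrix.one_apply]
  simp only [Lmap_re, Lmap_im, Lmap_zero]
  simp [matq_left2]
  ring

lemma cxy_Lmap (w : ℂ) : cxy (Lmap w) = w := by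
  apply Complex.ext
  · rw [cxy_re, Lmap_re]
  · rw [cxy_im, Lmap_im]

lemma Qfun_Lmap (a b : ℕ) (w : ℂ) :
    Qfun a b (Lmap w)
      = Real.exp (-((a + b : ℕ) : ℝ) * (w.re^2 + w.im^2)) • Pfun a b w := by
  rw [Qfun, cxy_Lmap, Lmap_re, Lmap_im]

lemma shear_eq (a b : ℕ) (δ : ℝ) (w : ℂ) :
    shear (gmet a b δ) (⇑Lmap) nuf w
      = ((δ : ℂ)) * (Qfun a b (Lmap w)) := by
  rw [shear]
  set Q := Qfun a b (Lmap w) with hQ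
  have h00 : matq Q 0 0 = -2 * Q.re := rfl
  have h01 : matq Q 0 1 = 2 * Q.im := rfl
  have h10 : matq Q 1 0 = 2 * Q.im := by simp [matq]
  have h11 : matq Q 1 1 = 2 * Q.re := by simp [matq]
  rw [secondFF_eq, secondFF_eq, secondFF_eq]
  rw [← hQ]
  simp only [Complex.one_re, Complex.one_im, Complex.I_re, Complex.I_im, h00, h01, h10, h11]
  apply Complex.ext <;>
    simp [Complex.div_re, Complex.div_im, Complex.normSq_apply] <;> ring

/-- For any `ε > 0` and any half-integer `k`, there exists a smooth Riemannian
metric `g` on ℝ³ with `‖g - g₀‖²_{L²} ≤ ε` and a smooth embedded surface in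
`(ℝ³, g)` carrying an isolated umbilic point of index `k`. -/
theorem exists_metric_with_umbilic_of_any_index (ε : ℝ) (hε : 0 < ε)
    (k : ℚ) (hk : ∃ n : ℤ, k = (n : ℚ) / 2) :
    ∃ (g : E3 → Matrix (Fin 3) (Fin 3) ℝ) (F : ℂ → E3) (ν : ℂ → E3) (w₀ : ℂ),
      IsRiemannianMetric g ∧
      l2DistFlatSq g ≤ ε ∧
      IsConformalEmbeddedChart g F ∧
      IsUnitNormalField g F ν ∧
      HasIsolatedUmbilicOfIndex (shear g F ν) w₀ k := by
  obtain ⟨n, hn⟩ := hk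
  set a : ℕ := (-n).toNat with ha
  set b : ℕ := n.toNat with hb
  have hZ : (b : ℤ) - (a : ℤ) = n := by rw [ha, hb]; omega
  have hab : (b : ℚ) - (a : ℚ) = (n : ℚ) := by exact_mod_cast hZ
  set C := ∫ x : E3, ∑ i : Fin 3, ∑ j : Fin 3,
      (chi (x 2) * matq (Qfun a b x) i j)^2 with hC
  have hC0 : 0 ≤ C := integral_nonneg (fun x => by positivity)
  set δ : ℝ := min (1/8 : ℝ) (Real.sqrt (ε / (C+1))) with hδdef
  have hδpos : 0 < δ := lt_min (by norm_num) (Real.sqrt_pos.mpr (by positivity))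
  have hδ8 : δ ≤ 1/8 := min_le_left _ _
  have hδsq : δ^2 ≤ ε/(C+1) := by
    have h1 : δ ≤ Real.sqrt (ε/(C+1)) := min_le_right _ _
    have h2 : Real.sqrt (ε/(C+1))^2 = ε/(C+1) := Real.sq_sqrt (by positivity)
    nlinarith [hδpos.le]
  have hinj : Function.Injective (⇑Lmap) := by
    intro w w' h
    apply Complex.ext
    · have := congrArg (fun x : E3 => x 0) h
      simpa [Lmap_re] using this
    · have := congrArg (fun x : E3 => x 1) h
      simpa [Lmap_im] using this
  refine ⟨gmet a b δ, ⇑Lmap, nuf, 0, ?_, ?_, ?_, ?_, ?_⟩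
  · -- IsRiemannianMetric
    exact ⟨fun i j => contDiff_gmet a b δ i j,
      fun x => ⟨isSymm_gmet a b δ x, posdef_gmet a b hδpos.le hδ8 x⟩⟩
  · -- l2 bound
    have hpt : (fun x : E3 => ∑ i : Fin 3, ∑ j : Fin 3,
        (gmet a b δ x i j - if i = j then 1 else 0)^2)
        = fun x : E3 => δ^2 * ∑ i : Fin 3, ∑ j : Fin 3,
            (chi (x 2) * matq (Qfun a b x) i j)^2 := by
      funext x
      simp only [gmet_entry, Fin.sum_univ_three]
      ring
    rw [l2DistFlatSq, hpt, MeasureTheory.integral_const_mul, ← hC]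
    have h3 : δ^2 * (C+1) ≤ ε := by
      have := mul_le_mul_of_nonneg_right hδsq (by linarith : (0:ℝ) ≤ C+1)
      rwa [div_mul_cancel₀ _ (by linarith : C + 1 ≠ 0)] at this
    nlinarith [sq_nonneg δ]
  · -- conformal chart
    refine ⟨Lmap.contDiff, hinj, ?_, ?_, ?_⟩
    · have hker : LinearMap.ker (Lmap : ℂ →ₗ[ℝ] E3) = ⊥ :=
        LinearMap.ker_eq_bot.mpr hinj
      exact (LinearMap.isClosedEmbedding_of_injective hker).isEmbedding
    · intro w
      rw [fderiv_F]
      exact hinj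
    · refine ⟨fun _ => 1, fun w => ⟨one_pos, fun u v => ?_⟩⟩
      rw [inducedMetric]
      simp only [fderiv_F, gmet_plane a b δ _ Lmap_zero, Matrix.one_apply,
        Fin.sum_univ_three, Lmap_re, Lmap_im, Lmap_zero]
      simp
  · -- unit normal field
    refine ⟨contDiff_const, fun w => ⟨?_, fun u => ?_⟩⟩
    · simp only [gmet_plane a b δ _ Lmap_zero, Matrix.one_apply, Fin.sum_univ_three,
        nuf, EuclideanSpace.single_apply]
      simp
    · simp only [gmet_plane a b δ _ Lmap_zero, Matrix.one_apply, Fin.sum_univ_three,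
        nuf, EuclideanSpace.single_apply, fderiv_F, Lmap_zero]
      simp [Lmap_zero]
  · -- umbilic point
    refine ⟨a, b, fun w => δ * Real.exp (-((a+b : ℕ) : ℝ) * (w.re^2 + w.im^2)),
      1, one_pos, ?_, ?_⟩
    · intro w hw
      constructor
      · rw [shear_eq, Qfun_Lmap, sub_zero, Pfun, Complex.real_smul]
        push_cast
        ring
      · exact ne_of_gt (by positivity)
    · rw [hn, hab]

end
end

section
/- For β = λξ̄/(1+ξξ̄)², the extrinsic curvature of the sphere R = R₀ satisfies κ = ρ² - |σ|² = [2(1+ξξ̄)² + λ(1+3|ξ|²cos2θ)][2(1+ξξ̄)² - λ(1-3|ξ|²cos2θ)] / (R₀²[(1+ξξ̄)⁴ - λ²ξξ̄]), and κ > 0 for all ξ whenever 0 < λ < 1; hence the sphere is strictly convex. -/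
/-! The curvature `ρ² - σ²` is a difference of squares `(A² - λ²)/(R₀² D)` with
`A = 2(1+ξξ̄)² + 3λ Re(ξ²)`, so it factors as `(A + λ)(A - λ)/(R₀² D)`. Since
`|Re(ξ²)| ≤ |ξ|²` and `|λ| < 1`, one has `A ≥ 2(1+|ξ|²)² - 3|ξ|² > |λ|`, so both factors
are positive, and `D = (1+|ξ|²)⁴ - λ²|ξ|² > 0` because `(1+x)⁴ ≥ 1 + 4x`. -/

theorem Complex.abs_re_sq_le_normSq (ξ : ℂ) : |(ξ ^ 2).re| ≤ Complex.normSq ξ :=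
  calc |(ξ ^ 2).re| ≤ ‖ξ ^ 2‖ := Complex.abs_re_le_norm _
  _ = Complex.normSq ξ := by rw [norm_pow, Complex.sq_norm]

lemma div_mul_sqrt_sq_sub_sq {D : ℝ} (hD : 0 ≤ D) (a b R : ℝ) :
    (a / (R * √D)) ^ 2 - (b / (R * √D)) ^ 2 = (a ^ 2 - b ^ 2) / (R ^ 2 * D) := by
  rw [div_pow, div_pow, mul_pow, Real.sq_sqrt hD, div_sub_div_same]

lemma one_add_pow_four_sub_mul_pos {x lam : ℝ} (hx : 0 ≤ x) (hlam : lam ^ 2 ≤ 4) :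
    0 < (1 + x) ^ 4 - lam ^ 2 * x := by
  nlinarith [mul_le_mul_of_nonneg_right hlam hx, pow_nonneg hx 2, pow_nonneg hx 3,
    pow_nonneg hx 4]

lemma abs_lt_two_mul_sq_add_three_mul {x c lam : ℝ} (hc : |c| ≤ x) (hlam : |lam| < 1) :
    |lam| < 2 * (1 + x) ^ 2 + 3 * lam * c := by
  have hx : 0 ≤ x := (abs_nonneg c).trans hc
  have hlamc : |lam * c| ≤ x := by
    rw [abs_mul]; nlinarith [abs_nonneg lam, abs_nonneg c]
  nlinarith [neg_abs_le (lam * c)]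

/-- For `β = λξ̄/(1+ξξ̄)²`, with second fundamental form components
`σ = λ/(R₀√((1+ξξ̄)⁴-λ²ξξ̄))` and
`ρ = -(2(1+ξξ̄)² + 3λ|ξ|²cos2θ)/(R₀√((1+ξξ̄)⁴-λ²ξξ̄))` (where `ξ = |ξ|e^{iθ}`,
so `|ξ|²cos2θ = Re(ξ²)`), the extrinsic curvature of the sphere `R = R₀`
satisfies
`κ = ρ² - |σ|² = [2(1+ξξ̄)² + λ(1+3|ξ|²cos2θ)][2(1+ξξ̄)² - λ(1-3|ξ|²cos2θ)]
  / (R₀²[(1+ξξ̄)⁴ - λ²ξξ̄])`,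
and `κ > 0` for all `ξ` whenever `0 < λ < 1`; hence the sphere is strictly
convex. -/
theorem sphere_strictly_convex (lam R₀ : ℝ) (hlam0 : 0 < lam) (hlam1 : lam < 1)
    (hR₀ : 0 < R₀) (ξ : ℂ) :
    let x : ℝ := Complex.normSq ξ
    let c : ℝ := (ξ ^ 2).re
    let σ : ℝ := lam / (R₀ * Real.sqrt ((1 + x) ^ 4 - lam ^ 2 * x))
    let ρ : ℝ := -(2 * (1 + x) ^ 2 + 3 * lam * c) /
      (R₀ * Real.sqrt ((1 + x) ^ 4 - lam ^ 2 * x))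
    ρ ^ 2 - σ ^ 2
        = (2 * (1 + x) ^ 2 + lam * (1 + 3 * c)) * (2 * (1 + x) ^ 2 - lam * (1 - 3 * c))
            / (R₀ ^ 2 * ((1 + x) ^ 4 - lam ^ 2 * x)) ∧
    0 < ρ ^ 2 - σ ^ 2 := by
  intro x c σ ρ
  have hlam : |lam| < 1 := abs_lt.mpr ⟨by linarith, hlam1⟩
  have hD : 0 < (1 + x) ^ 4 - lam ^ 2 * x :=
    one_add_pow_four_sub_mul_pos (Complex.normSq_nonneg ξ) (by nlinarith)
  have hA := abs_lt_two_mul_sq_add_three_mul (Complex.abs_re_sq_le_normSq ξ) hlam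
  have hκ : ρ ^ 2 - σ ^ 2
      = (2 * (1 + x) ^ 2 + lam * (1 + 3 * c)) * (2 * (1 + x) ^ 2 - lam * (1 - 3 * c))
          / (R₀ ^ 2 * ((1 + x) ^ 4 - lam ^ 2 * x)) := by
    rw [div_mul_sqrt_sq_sub_sq hD.le]
    ring
  refine ⟨hκ, hκ ▸ div_pos (mul_pos ?_ ?_) (by positivity)⟩ <;>
    linarith [le_abs_self lam, neg_abs_le lam]
end
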